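/- arXiv:2405.20281 — 2 statements merged into one kernel-verified Lean document; each statement's English description precedes it below -/
import Mathlib

section
/- Strong direct product theorem for memoryless algorithms: let G^× = G_1 × ⋯ × G_k be a direct product of plain games and let A be a (T_1,…,T_k)-memoryless algorithm for G^×. Then the winning probability of A is at most ∏_{i=1}^k ε_{G_i}(T_i). -/
/-!
Replace winning probabilities by arbitrary payoffs `u i (f i) e`, a class closed under
conditioning on oracle values, and prove `∑_f ∏_i u_i(f_i, A_i^f) ≤ ∏_i B_i` by induction on the
total depth of the trees, where `B_i` is the best payoff of a single-oracle algorithm as deep as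
`A_i`, or the exact payoff if `A_i` is a leaf. If all trees are leaves the sum factorizes.
Otherwise answer at once the root queries of a set `S` of trees that hit pairwise distinct
oracles `D`, each belonging to a tree of `S` or to a leaf. Splitting oracle `j` by its value at
one point costs `j` exactly one query (`sum_maxPayoff_condAt_le`), and that query is paid by the
root query that `A_j` itself loses; splitting a leaf costs nothing. Such an `S` exists: either
some root query hits a leaf, or sending each inner tree to the oracle of its root query permutes
a nonempty set of inner trees.
-/

open scoped ENNReal BigOperators

noncomputable section

/-- `{0,1}`-valued indicator of a proposition, in `ℝ≥0∞`. -/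
def ind (p : Prop) : ℝ≥0∞ :=
  haveI := Classical.propDecidable p
  if p then 1 else 0

/-- Deterministic oracle algorithms making at most `T` queries, modeled as decision
trees of depth at most `T`: a query is an element `q : Q`, the oracle's answer to `q`
has type `Ans q`, and the final output has type `O`. -/
inductive DT (Q : Type) (Ans : Q → Type) (O : Type) : ℕ → Type
  | ret {T : ℕ} (o : O) : DT Q Ans O T
  | query {T : ℕ} (q : Q) (cont : Ans q → DT Q Ans O T) : DT Q Ans O (T + 1)

/-- Run a decision tree against an oracle. -/
def DT.run {Q : Type} {Ans : Q → Type} {O : Type} :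
    {T : ℕ} → DT Q Ans O T → ((q : Q) → Ans q) → O
  | _, DT.ret o, _ => o
  | _, DT.query q cont, f => DT.run (cont (f q)) f

/-- The number of queries satisfying `p` made along the execution path on oracle `f`. -/
def DT.countP {Q : Type} {Ans : Q → Type} {O : Type} (p : Q → Prop) :
    {T : ℕ} → DT Q Ans O T → ((q : Q) → Ans q) → ℕ
  | _, DT.ret _, _ => 0
  | _, DT.query q cont, f =>
      (haveI := Classical.propDecidable (p q); if p q then 1 else 0)
        + DT.countP p (cont (f q)) f

/-- A (single-challenge) game: an oracle distribution `μ` over functions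
`Fin M → Fin N`, a challenge distribution `π f` for each oracle `f`, and an
accepting outcome set `R f ch` for each oracle and challenge. -/
structure Game where
  M : ℕ
  N : ℕ
  hM : 0 < M
  hN : 0 < N
  Ch : Type
  chFin : Fintype Ch
  Out : Type
  μ : PMF (Fin M → Fin N)
  π : (Fin M → Fin N) → PMF Ch
  R : (Fin M → Fin N) → Ch → Set Out

attribute [instance] Game.chFin

namespace Game

variable (G : Game)

/-- Winning probability of a deterministic `T`-query algorithm (taking the challenge
as classical input) for the game `G`. -/
def detWinProb {T : ℕ} (a : G.Ch → DT (Fin G.M) (fun _ => Fin G.N) G.Out T) : ℝ≥0∞ :=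
  ∑' f : Fin G.M → Fin G.N, G.μ f * ∑' ch : G.Ch, G.π f ch * ind ((a ch).run f ∈ G.R f ch)

/-- Uniform security `ε_G(T)`: the supremum, over randomized `T`-query algorithms
(probability distributions over deterministic ones), of the winning probability. -/
def unifSec (T : ℕ) : ℝ≥0∞ :=
  ⨆ A : PMF (G.Ch → DT (Fin G.M) (fun _ => Fin G.N) G.Out T),
    ∑' a, A a * G.detWinProb a

/-- Winning probability, in the salted game `G_K`, of a non-uniform algorithm:
a randomized `T`-query algorithm `A` receiving `S` bits of advice together with the
salt and challenge, and an advice function `adv` mapping the joint oracle to `S` bits.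
The joint oracle consists of `K` i.i.d. copies `g 0, …, g (K-1)` of the oracle of `G`,
the salt `k` is uniform on `Fin K` and the challenge is drawn from `π (g k)`. -/
def saltedWinProb (K S T : ℕ)
    (A : PMF ((Fin S → Bool) × Fin K × G.Ch →
      DT (Fin K × Fin G.M) (fun _ => Fin G.N) G.Out T))
    (adv : (Fin K → Fin G.M → Fin G.N) → Fin S → Bool) : ℝ≥0∞ :=
  ∑' g : Fin K → Fin G.M → Fin G.N,
    (∏ k, G.μ (g k)) *
      ((K : ℝ≥0∞)⁻¹ *
        ∑' k : Fin K, ∑' ch : G.Ch, G.π (g k) ch *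
          ∑' a, A a *
            ind ((a (adv g, k, ch)).run (fun q => g q.1 q.2) ∈ G.R (g k) ch))

/-- Non-uniform security `ε_{G_K}(S,T)` of the salted game `G_K`: the supremum of the
winning probability over all non-uniform `(S,T)`-algorithms `(A, adv)`. -/
def saltedNonunifSec (K S T : ℕ) : ℝ≥0∞ :=
  ⨆ (A : PMF ((Fin S → Bool) × Fin K × G.Ch →
      DT (Fin K × Fin G.M) (fun _ => Fin G.N) G.Out T))
    (adv : (Fin K → Fin G.M → Fin G.N) → Fin S → Bool),
    G.saltedWinProb K S T A adv

/-- The marginal probability of a challenge `ch` (for `f ∼ μ`, `ch ∼ π f`). -/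
def chProb (ch : G.Ch) : ℝ≥0∞ := ∑' f : Fin G.M → Fin G.N, G.μ f * G.π f ch

/-- The oracle distribution `μ_ch` conditioned on the drawn challenge being `ch`. -/
def condDist (ch : G.Ch) (f : Fin G.M → Fin G.N) : ℝ≥0∞ :=
  G.μ f * G.π f ch / G.chProb ch

/-- Uniform security `ε_{G_ch}(T)` of the challenge-conditioned plain game `G_ch`:
the supremum over randomized `T`-query algorithms of the probability, for
`f ∼ μ_ch`, that the output lies in `R f ch`. -/
def condSec (ch : G.Ch) (T : ℕ) : ℝ≥0∞ :=
  ⨆ A : PMF (DT (Fin G.M) (fun _ => Fin G.N) G.Out T),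
    ∑' a, A a * ∑' f : Fin G.M → Fin G.N, G.condDist ch f * ind (a.run f ∈ G.R f ch)

/-- Uniform security `ε_{G^n}(T')` of the multi-challenge game `G^n`: `n` i.i.d.
challenges are drawn from `π f` and the algorithm must answer all of them. -/
def multiSec (n T' : ℕ) : ℝ≥0∞ :=
  ⨆ A : PMF ((Fin n → G.Ch) → DT (Fin G.M) (fun _ => Fin G.N) (Fin n → G.Out) T'),
    ∑' a, A a * ∑' f : Fin G.M → Fin G.N, G.μ f *
      ∑' chs : Fin n → G.Ch,
        (∏ j, G.π f (chs j)) * ind (∀ j, (a chs).run f j ∈ G.R f (chs j))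

end Game

/-- A plain game: a game without challenges. -/
structure PlainGame where
  M : ℕ
  N : ℕ
  hM : 0 < M
  hN : 0 < N
  Out : Type
  μ : PMF (Fin M → Fin N)
  R : (Fin M → Fin N) → Set Out

namespace PlainGame

/-- Uniform security `ε_G(T)` of a plain game. -/
def unifSec (G : PlainGame) (T : ℕ) : ℝ≥0∞ :=
  ⨆ A : PMF (DT (Fin G.M) (fun _ => Fin G.N) G.Out T),
    ∑' a, A a * ∑' f : Fin G.M → Fin G.N, G.μ f * ind (a.run f ∈ G.R f)

end PlainGame

/-- Query domain for joint oracle access to the oracles of `k` plain games: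
each query is addressed to one of the oracles. -/
abbrev ProdQ {k : ℕ} (Gs : Fin k → PlainGame) : Type := (i : Fin k) × Fin (Gs i).M

/-- Answer type for queries in the direct product. -/
abbrev ProdAns {k : ℕ} (Gs : Fin k → PlainGame) : ProdQ Gs → Type :=
  fun q => Fin (Gs q.1).N

/-- The joint oracle `(f 0, …, f (k-1))` as a single oracle function. -/
def jointOracle {k : ℕ} {Gs : Fin k → PlainGame}
    (f : (i : Fin k) → Fin (Gs i).M → Fin (Gs i).N) : (q : ProdQ Gs) → ProdAns Gs q :=
  fun q => f q.1 q.2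

/-- Winning probability of a `(T 0, …, T (k-1))`-memoryless algorithm, given by
deterministic algorithms `A i` (each making at most `T i` queries and each with
joint oracle access) run sequentially with no shared memory; the oracles are drawn
independently, and the algorithm wins if every output `(A i).run` is accepted. -/
def memorylessWinProb {k : ℕ} (Gs : Fin k → PlainGame) {T : Fin k → ℕ}
    (A : (i : Fin k) → DT (ProdQ Gs) (ProdAns Gs) (Gs i).Out (T i)) : ℝ≥0∞ :=
  ∑' f : (i : Fin k) → Fin (Gs i).M → Fin (Gs i).N,
    (∏ i, (Gs i).μ (f i)) * ind (∀ i, (A i).run (jointOracle f) ∈ (Gs i).R (f i))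

/-- Winning probability of a deterministic algorithm with joint oracle access
outputting a tuple `(e 0, …, e (k-1))` for the direct product game. -/
def jointWinProb {k : ℕ} (Gs : Fin k → PlainGame) {B : ℕ}
    (A : DT (ProdQ Gs) (ProdAns Gs) ((i : Fin k) → (Gs i).Out) B) : ℝ≥0∞ :=
  ∑' f : (i : Fin k) → Fin (Gs i).M → Fin (Gs i).N,
    (∏ i, (Gs i).μ (f i)) * ind (∀ i, A.run (jointOracle f) i ∈ (Gs i).R (f i))

/-- A deterministic algorithm is `(T 0, …, T (k-1))`-fair if in every execution it
makes at most `T i` queries to the `i`-th oracle. -/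
def IsFair {k : ℕ} {Gs : Fin k → PlainGame} {O : Type} {B : ℕ} (T : Fin k → ℕ)
    (A : DT (ProdQ Gs) (ProdAns Gs) O B) : Prop :=
  ∀ (f : (i : Fin k) → Fin (Gs i).M → Fin (Gs i).N) (i : Fin k),
    A.countP (fun q => q.1 = i) (jointOracle f) ≤ T i

end

open Finset

noncomputable section

theorem ind_forall {α : Type*} [Fintype α] (p : α → Prop) :
    ind (∀ a, p a) = ∏ a, ind (p a) := by
  by_cases h : ∀ a, p a
  · simp [ind, h]
  · obtain ⟨a, ha⟩ := not_forall.mp h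
    rw [prod_eq_zero (mem_univ a) (by simp [ind, ha])]
    simp [ind, h]

theorem ENNReal.sum_iSup_le_iSup_sum {α κ : Type*} [Fintype α] (g : α → κ → ℝ≥0∞) :
    ∑ a, ⨆ i, g a i ≤ ⨆ c : α → κ, ∑ a, g a (c a) := by
  calc ∑ a, ⨆ i, g a i ≤ ∑ a, ⨆ c : α → κ, g a (c a) :=
        sum_le_sum fun a _ => iSup_le fun i => le_iSup_of_le (fun _ => i) le_rfl
    _ = ⨆ c : α → κ, ∑ a, g a (c a) := by
        refine ENNReal.finsetSum_iSup fun c₁ c₂ =>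
          ⟨fun a => if g a (c₁ a) ≤ g a (c₂ a) then c₂ a else c₁ a, fun a => ?_⟩
        dsimp only
        split_ifs with h
        · exact ⟨h, le_rfl⟩
        · exact ⟨le_rfl, (not_le.mp h).le⟩

theorem Finset.exists_subset_image_eq {α : Type*} [DecidableEq α] (f : α → α) {T : Finset α}
    (hT : T.Nonempty) (hf : ∀ a ∈ T, f a ∈ T) : ∃ S ⊆ T, S.Nonempty ∧ S.image f = S := by
  induction T using Finset.strongInduction with
  | H T ih =>
  have hsub : T.image f ⊆ T := image_subset_iff.2 hf
  by_cases heq : T.image f = T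
  · exact ⟨T, subset_rfl, hT, heq⟩
  · obtain ⟨S, hS, hne, hSf⟩ := ih (T.image f) (ssubset_of_subset_of_ne hsub heq) (hT.image f)
      fun a ha => mem_image_of_mem f (hsub ha)
    exact ⟨S, hS.trans hsub, hne, hSf⟩

namespace DT

variable {Q : Type} {Ans : Q → Type} {O : Type}

def lift : {T : ℕ} → DT Q Ans O T → DT Q Ans O (T + 1)
  | _, ret o => ret o
  | _, query q cont => query q fun a => lift (cont a)

@[simp]
theorem run_lift : ∀ {T : ℕ} (A : DT Q Ans O T) (g : (q : Q) → Ans q), A.lift.run g = A.run g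
  | _, ret _, _ => rfl
  | _, query q cont, g => run_lift (cont (g q)) g

end DT

section SingleOracle

variable {α β O : Type}

def condAt [DecidableEq β] (u : (α → β) → O → ℝ≥0∞) (x : α) (a : β) : (α → β) → O → ℝ≥0∞ :=
  fun h o => if h x = a then u h o else 0

theorem sum_condAt [Fintype β] [DecidableEq β] (u : (α → β) → O → ℝ≥0∞) (x : α) (h : α → β)
    (o : O) : ∑ a, condAt u x a h o = u h o := by
  simp [condAt]

variable [Fintype α] [DecidableEq α] [Fintype β]

def maxPayoff (u : (α → β) → O → ℝ≥0∞) (t : ℕ) : ℝ≥0∞ :=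
  ⨆ C : DT α (fun _ => β) O t, ∑ h, u h (C.run h)

theorem sum_le_maxPayoff (u : (α → β) → O → ℝ≥0∞) {t : ℕ} (C : DT α (fun _ => β) O t) :
    ∑ h, u h (C.run h) ≤ maxPayoff u t :=
  le_iSup (fun C : DT α (fun _ => β) O t => ∑ h, u h (C.run h)) C

theorem maxPayoff_le_succ (u : (α → β) → O → ℝ≥0∞) (t : ℕ) :
    maxPayoff u t ≤ maxPayoff u (t + 1) :=
  iSup_le fun C => by simpa using sum_le_maxPayoff u C.lift

theorem sum_maxPayoff_condAt_le [DecidableEq β] (u : (α → β) → O → ℝ≥0∞) (x : α) (t : ℕ) :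
    ∑ a, maxPayoff (condAt u x a) t ≤ maxPayoff u (t + 1) := by
  refine (ENNReal.sum_iSup_le_iSup_sum _).trans (iSup_le fun c => ?_)
  calc ∑ a, ∑ h, condAt u x a h ((c a).run h) = ∑ h, u h ((c (h x)).run h) := by
        rw [sum_comm]; simp [condAt]
    _ ≤ maxPayoff u (t + 1) := sum_le_maxPayoff u (DT.query x c)

variable {Q : Type} {Ans : Q → Type}

def treeBound (u : (α → β) → O → ℝ≥0∞) : (Σ t, DT Q Ans O t) → ℝ≥0∞
  | ⟨_, .ret o⟩ => ∑ h, u h o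
  | ⟨_, .query (T := s) _ _⟩ => maxPayoff u (s + 1)

theorem treeBound_le_maxPayoff (u : (α → β) → O → ℝ≥0∞) :
    ∀ A : Σ t, DT Q Ans O t, treeBound u A ≤ maxPayoff u A.1
  | ⟨_, .ret o⟩ => sum_le_maxPayoff u (.ret o)
  | ⟨_, .query _ _⟩ => le_rfl

def IsLeaf (A : Σ t, DT Q Ans O t) : Prop :=
  ∃ o, A.2 = .ret o

theorem treeBound_of_isLeaf (u : (α → β) → O → ℝ≥0∞) {A : Σ t, DT Q Ans O t} {o : O}
    (hA : A.2 = .ret o) : treeBound u A = ∑ h, u h o := by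
  obtain ⟨t, A⟩ := A
  rw [show A = .ret o from hA]
  rfl

end SingleOracle

section Joint

variable {ι : Type} {X Y O : ι → Type}

abbrev JointTree (X Y : ι → Type) (O' : Type) : Type :=
  Σ t, DT (Σ i, X i) (fun q => Y q.1) O' t

def QueriesAt {O' : Type} (A : JointTree X Y O') (j : ι) : Prop :=
  ∃ (x : X j) (s : ℕ) (br : Y j → DT (Σ i, X i) (fun q => Y q.1) O' s),
    A = ⟨s + 1, .query ⟨j, x⟩ br⟩

theorem isLeaf_or_exists_queriesAt {O' : Type} (A : JointTree X Y O') :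
    IsLeaf A ∨ ∃ j, QueriesAt A j := by
  obtain ⟨_, _ | ⟨⟨j, x⟩, br⟩⟩ := A
  · exact .inl ⟨_, rfl⟩
  · exact .inr ⟨j, x, _, br, rfl⟩

/-- The root queries of the trees in `S`, addressed to the pairwise distinct oracles
`e i ∈ D`, to be answered all at once in one induction step. -/
structure RootPeel (A : ∀ i, JointTree X Y (O i)) where
  S : Finset ι
  D : Finset ι
  e : S ≃ D
  x : ∀ i : S, X (e i)
  s : S → ℕ
  br : ∀ i : S, Y (e i) → DT (Σ j, X j) (fun q => Y q.1) (O i) (s i)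
  tree_eq : ∀ i : S, A i = ⟨s i + 1, .query ⟨e i, x i⟩ (br i)⟩
  isLeaf_of_not_mem : ∀ j : D, (j : ι) ∉ S → IsLeaf (A j)
  nonempty : S.Nonempty

namespace RootPeel

variable {A : ∀ i, JointTree X Y (O i)} (P : RootPeel A)

/-- The point of oracle `d` queried at the root of `A (P.e.symm d)`. -/
def point (d : P.D) : X d := Equiv.piCongrLeft (fun d : P.D => X d) P.e P.x d

theorem point_e (i : P.S) : P.point (P.e i) = P.x i :=
  Equiv.piCongrLeft_apply_apply _ _ _ _

theorem run_eq (i : P.S) (g : (q : Σ j, X j) → Y q.1) :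
    (A i).2.run g = (P.br i (g ⟨P.e i, P.x i⟩)).run g := by
  rw [P.tree_eq i]
  rfl

variable [DecidableEq ι]

def tree (v : ∀ d : P.D, Y d) : ∀ i, JointTree X Y (O i) :=
  fun i => if hi : i ∈ P.S then ⟨P.s ⟨i, hi⟩, P.br ⟨i, hi⟩ (v (P.e ⟨i, hi⟩))⟩ else A i

variable {P} {v : ∀ d : P.D, Y d}

theorem tree_of_mem {i : ι} (hi : i ∈ P.S) :
    P.tree v i = ⟨P.s ⟨i, hi⟩, P.br ⟨i, hi⟩ (v (P.e ⟨i, hi⟩))⟩ :=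
  dif_pos hi

theorem tree_of_not_mem {i : ι} (hi : i ∉ P.S) : P.tree v i = A i :=
  dif_neg hi

variable (P)

theorem sum_depth_tree_lt [Fintype ι] (v : ∀ d : P.D, Y d) :
    ∑ i, (P.tree v i).1 < ∑ i, (A i).1 := by
  have hdepth : ∀ i (hi : i ∈ P.S), (A i).1 = P.s ⟨i, hi⟩ + 1 := fun i hi => by
    rw [P.tree_eq ⟨i, hi⟩]
  have hle : ∀ i, (P.tree v i).1 ≤ (A i).1 := fun i => by
    by_cases hi : i ∈ P.S
    · rw [tree_of_mem hi, hdepth i hi]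
      exact Nat.le_succ _
    · rw [tree_of_not_mem hi]
  obtain ⟨i, hi⟩ := P.nonempty
  refine sum_lt_sum (fun i _ => hle i) ⟨i, mem_univ i, ?_⟩
  rw [tree_of_mem hi, hdepth i hi]
  exact Nat.lt_succ_self _

variable [∀ i, DecidableEq (Y i)]

def payoff (u : ∀ i, (X i → Y i) → O i → ℝ≥0∞) (v : ∀ d : P.D, Y d) :
    ∀ j, (X j → Y j) → O j → ℝ≥0∞ :=
  fun j => if hj : j ∈ P.D then condAt (u j) (P.point ⟨j, hj⟩) (v ⟨j, hj⟩) else u j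

variable {P} {u : ∀ i, (X i → Y i) → O i → ℝ≥0∞}

theorem payoff_of_mem {j : ι} (hj : j ∈ P.D) :
    P.payoff u v j = condAt (u j) (P.point ⟨j, hj⟩) (v ⟨j, hj⟩) :=
  dif_pos hj

theorem payoff_of_not_mem {j : ι} (hj : j ∉ P.D) : P.payoff u v j = u j :=
  dif_neg hj

variable (P u) [∀ i, Fintype (X i)] [∀ i, DecidableEq (X i)] [∀ i, Fintype (Y i)]

def peeledBound (d : P.D) (a : Y d) : ℝ≥0∞ :=
  if hd : (d : ι) ∈ P.S then maxPayoff (condAt (u d) (P.point d) a) (P.s ⟨d, hd⟩)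
  else treeBound (condAt (u d) (P.point d) a) (A d)

theorem treeBound_tree_le_peeledBound (v : ∀ d : P.D, Y d) (d : P.D) :
    treeBound (P.payoff u v d) (P.tree v d) ≤ P.peeledBound u d (v d) := by
  rw [payoff_of_mem d.2, peeledBound]
  split_ifs with hd
  · rw [tree_of_mem hd]
    exact treeBound_le_maxPayoff _ _
  · rw [tree_of_not_mem hd]

theorem sum_peeledBound_le (d : P.D) : ∑ a, P.peeledBound u d a ≤ treeBound (u d) (A d) := by
  by_cases hd : (d : ι) ∈ P.S
  · simp only [peeledBound, dif_pos hd]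
    rw [P.tree_eq ⟨d, hd⟩]
    exact sum_maxPayoff_condAt_le _ _ _
  · obtain ⟨o, ho⟩ := P.isLeaf_of_not_mem d hd
    simp only [peeledBound, dif_neg hd, treeBound_of_isLeaf _ ho]
    rw [sum_comm]
    simp only [sum_condAt, le_rfl]

theorem treeBound_tree_le_of_not_mem (v : ∀ d : P.D, Y d) {j : ι} (hj : j ∉ P.D) :
    treeBound (P.payoff u v j) (P.tree v j) ≤ treeBound (u j) (A j) := by
  rw [payoff_of_not_mem hj]
  by_cases hi : j ∈ P.S
  · rw [tree_of_mem hi, P.tree_eq ⟨j, hi⟩]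
    exact (treeBound_le_maxPayoff _ _).trans (maxPayoff_le_succ _ _)
  · rw [tree_of_not_mem hi]

theorem sum_prod_treeBound_le [Fintype ι] :
    ∑ v, ∏ i, treeBound (P.payoff u v i) (P.tree v i) ≤ ∏ i, treeBound (u i) (A i) := by
  have hsplit : ∀ g : ι → ℝ≥0∞, ∏ i, g i = (∏ d : P.D, g d) * ∏ i ∈ P.Dᶜ, g i := fun g => by
    rw [prod_coe_sort P.D g, prod_mul_prod_compl]
  calc ∑ v, ∏ i, treeBound (P.payoff u v i) (P.tree v i)
      = ∑ v, (∏ d : P.D, treeBound (P.payoff u v d) (P.tree v d)) *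
          ∏ i ∈ P.Dᶜ, treeBound (P.payoff u v i) (P.tree v i) :=
        sum_congr rfl fun v _ => hsplit _
    _ ≤ ∑ v : (∀ d : P.D, Y d), (∏ d : P.D, P.peeledBound u d (v d)) *
          ∏ i ∈ P.Dᶜ, treeBound (u i) (A i) := by
        gcongr with v _ d _ i hi
        · exact P.treeBound_tree_le_peeledBound u v d
        · exact P.treeBound_tree_le_of_not_mem u v (mem_compl.mp hi)
    _ = (∏ d : P.D, ∑ a, P.peeledBound u d a) * ∏ i ∈ P.Dᶜ, treeBound (u i) (A i) := by
        rw [← sum_mul, Fintype.prod_sum]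
    _ ≤ (∏ d : P.D, treeBound (u d) (A d)) * ∏ i ∈ P.Dᶜ, treeBound (u i) (A i) := by
        gcongr with d
        exact P.sum_peeledBound_le u d
    _ = ∏ i, treeBound (u i) (A i) := (hsplit fun i => treeBound (u i) (A i)).symm

end RootPeel

theorem RootPeel.nonempty_of_injOn [DecidableEq ι] {A : ∀ i, JointTree X Y (O i)}
    (S : Finset ι) (σ : ι → ι) (hσ : Set.InjOn σ S) (hq : ∀ i ∈ S, QueriesAt (A i) (σ i))
    (hleaf : ∀ i ∈ S, σ i ∉ S → IsLeaf (A (σ i))) (hS : S.Nonempty) :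
    Nonempty (RootPeel A) := by
  choose x s br hbr using hq
  let e : S ≃ S.image σ := Equiv.ofBijective (fun i => ⟨σ i, mem_image_of_mem σ i.2⟩)
    ⟨fun i j h => Subtype.ext (hσ i.2 j.2 (congrArg Subtype.val h)), fun ⟨j, hj⟩ => by
      obtain ⟨i, hi, rfl⟩ := mem_image.1 hj
      exact ⟨⟨i, hi⟩, rfl⟩⟩
  refine ⟨{
    S := S
    D := S.image σ
    e := e
    x := fun i => x i i.2
    s := fun i => s i i.2
    br := fun i => br i i.2
    tree_eq := fun i => hbr i i.2
    isLeaf_of_not_mem := ?_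
    nonempty := hS }⟩
  rintro ⟨j, hj⟩ hjS
  obtain ⟨i, hi, rfl⟩ := mem_image.1 hj
  exact hleaf i hi hjS

theorem nonempty_rootPeel [Fintype ι] [DecidableEq ι] {A : ∀ i, JointTree X Y (O i)}
    (h : ∃ i, ¬IsLeaf (A i)) : Nonempty (RootPeel A) := by
  classical
  have htarget : ∀ i, ∃ j, ¬IsLeaf (A i) → QueriesAt (A i) j := fun i =>
    (isLeaf_or_exists_queriesAt (A i)).elim (fun hl => ⟨i, fun hn => (hn hl).elim⟩)
      fun ⟨j, hj⟩ => ⟨j, fun _ => hj⟩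
  choose σ hσ using htarget
  set T := univ.filter fun i => ¬IsLeaf (A i) with hT
  by_cases hexit : ∃ i ∈ T, σ i ∉ T
  · obtain ⟨i, hi, hσi⟩ := hexit
    refine RootPeel.nonempty_of_injOn {i} σ (by simp) ?_ ?_ (singleton_nonempty i)
    · simpa using hσ i (mem_filter.1 hi).2
    · intro j hj _
      rw [mem_singleton.1 hj]
      simpa [hT] using hσi
  · replace hexit : ∀ i ∈ T, σ i ∈ T := fun i hi => by_contra fun h => hexit ⟨i, hi, h⟩
    obtain ⟨i, hi⟩ := h
    obtain ⟨S, hST, hS, hSσ⟩ :=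
      exists_subset_image_eq σ ⟨i, mem_filter.2 ⟨mem_univ i, hi⟩⟩ hexit
    refine RootPeel.nonempty_of_injOn S σ (injOn_of_card_image_eq (by rw [hSσ]))
      (fun i hi => hσ i (mem_filter.1 (hST hi)).2) (fun i hi hσi => ?_) hS
    exact absurd (hSσ ▸ mem_image_of_mem σ hi) hσi

variable [Fintype ι] [DecidableEq ι] [∀ i, Fintype (X i)] [∀ i, DecidableEq (X i)]
  [∀ i, Fintype (Y i)]

def jointPayoff (u : ∀ i, (X i → Y i) → O i → ℝ≥0∞) (A : ∀ i, JointTree X Y (O i)) : ℝ≥0∞ :=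
  ∑ f : (∀ i, X i → Y i), ∏ i, u i (f i) ((A i).2.run (Sigma.uncurry f))

theorem jointPayoff_of_isLeaf (u : ∀ i, (X i → Y i) → O i → ℝ≥0∞)
    {A : ∀ i, JointTree X Y (O i)} (hA : ∀ i, IsLeaf (A i)) :
    jointPayoff u A = ∏ i, treeBound (u i) (A i) := by
  choose o ho using hA
  have hrun : ∀ i g, (A i).2.run g = o i := fun i g => by rw [ho i]; rfl
  simp only [jointPayoff, hrun, treeBound_of_isLeaf _ (ho _)]
  exact (Fintype.prod_sum fun i h => u i h (o i)).symm

theorem RootPeel.jointPayoff_eq_sum [∀ i, DecidableEq (Y i)] {A : ∀ i, JointTree X Y (O i)}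
    (P : RootPeel A) (u : ∀ i, (X i → Y i) → O i → ℝ≥0∞) :
    jointPayoff u A = ∑ v, jointPayoff (P.payoff u v) (P.tree v) := by
  refine (sum_comm.trans (sum_congr rfl fun f _ => ?_)).symm
  rw [Fintype.sum_eq_single (fun d : P.D => f d (P.point d))]
  · refine prod_congr rfl fun j _ => ?_
    have hpay : P.payoff u (fun d : P.D => f d (P.point d)) j (f j) = u j (f j) := by
      by_cases hj : j ∈ P.D
      · funext o; simp [payoff_of_mem hj, condAt]
      · rw [payoff_of_not_mem hj]
    have hrun : (P.tree (fun d : P.D => f d (P.point d)) j).2.run (Sigma.uncurry f) =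
        (A j).2.run (Sigma.uncurry f) := by
      by_cases hi : j ∈ P.S
      · rw [tree_of_mem hi, P.run_eq ⟨j, hi⟩, ← P.point_e]
        rfl
      · rw [tree_of_not_mem hi]
    rw [hpay, hrun]
  · intro v hv
    obtain ⟨d, hd⟩ := Function.ne_iff.mp hv
    refine prod_eq_zero (mem_univ (d : ι)) ?_
    simp [payoff_of_mem d.2, condAt, Ne.symm hd]

theorem jointPayoff_le_prod_treeBound [∀ i, DecidableEq (Y i)]
    (u : ∀ i, (X i → Y i) → O i → ℝ≥0∞) (A : ∀ i, JointTree X Y (O i)) :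
    jointPayoff u A ≤ ∏ i, treeBound (u i) (A i) := by
  induction hn : ∑ i, (A i).1 using Nat.strong_induction_on generalizing u A with
  | _ n ih =>
  by_cases hleaf : ∀ i, IsLeaf (A i)
  · exact (jointPayoff_of_isLeaf u hleaf).le
  obtain ⟨P⟩ := nonempty_rootPeel (not_forall.mp hleaf)
  calc jointPayoff u A = ∑ v, jointPayoff (P.payoff u v) (P.tree v) := P.jointPayoff_eq_sum u
    _ ≤ ∑ v, ∏ i, treeBound (P.payoff u v i) (P.tree v i) :=
        sum_le_sum fun v _ => ih _ (hn ▸ P.sum_depth_tree_lt v) _ _ rfl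
    _ ≤ ∏ i, treeBound (u i) (A i) := P.sum_prod_treeBound_le u

end Joint

theorem PlainGame.maxPayoff_le_unifSec (G : PlainGame) (t : ℕ) :
    maxPayoff (fun h o => G.μ h * ind (o ∈ G.R h)) t ≤ G.unifSec t :=
  iSup_le fun C => le_iSup_of_le (PMF.pure C) (by simp [tsum_fintype])

end

/-- Strong direct product theorem for memoryless algorithms:
a `(T 0, …, T (k-1))`-memoryless algorithm for the direct product
`G 0 × ⋯ × G (k-1)` wins with probability at most `∏ i, ε_{G i}(T i)`. -/
theorem memoryless_sdpt {k : ℕ} (Gs : Fin k → PlainGame) (T : Fin k → ℕ)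
    (A : (i : Fin k) → DT (ProdQ Gs) (ProdAns Gs) (Gs i).Out (T i)) :
    memorylessWinProb Gs A ≤ ∏ i, (Gs i).unifSec (T i) := by
  let u i (h : Fin (Gs i).M → Fin (Gs i).N) (o : (Gs i).Out) := (Gs i).μ h * ind (o ∈ (Gs i).R h)
  have hwin : memorylessWinProb Gs A = jointPayoff u fun i => ⟨T i, A i⟩ := by
    simp only [memorylessWinProb, tsum_fintype, ind_forall, ← prod_mul_distrib]
    rfl
  calc memorylessWinProb Gs A = jointPayoff u fun i => ⟨T i, A i⟩ := hwin
    _ ≤ ∏ i, treeBound (u i) ⟨T i, A i⟩ := jointPayoff_le_prod_treeBound u _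
    _ ≤ ∏ i, (Gs i).unifSec (T i) := prod_le_prod' fun i _ =>
        (treeBound_le_maxPayoff _ _).trans ((Gs i).maxPayoff_le_unifSec (T i))
end

section
/- Let K, L ∈ ℤ+ and let k_1,…,k_L be independent uniformly random elements of Fin K. Let ℓ be the number of distinct values among k_1,…,k_L. Then for every real c ≥ 0, E[c^ℓ] ≤ (c + L/K)^L. -/
open scoped BigOperators

private lemma image_cons_aux {n K : ℕ} (k : Fin K) (ks : Fin n → Fin K) :
    Finset.image (Fin.cons k ks : Fin (n+1) → Fin K) Finset.univ
      = insert k (Finset.image ks Finset.univ) := by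
  ext x
  simp only [Finset.mem_image, Finset.mem_insert, Finset.mem_univ, true_and]
  constructor
  · rintro ⟨i, rfl⟩
    refine Fin.cases ?_ ?_ i
    · left; simp
    · intro j; right; exact ⟨j, by simp⟩
  · rintro (rfl | ⟨j, rfl⟩)
    · exact ⟨0, by simp⟩
    · exact ⟨j.succ, by simp⟩

private lemma sum_insert_pow {K : ℕ} (c : ℝ) (s : Finset (Fin K)) :
    ∑ k : Fin K, c ^ (insert k s).card
      = (s.card : ℝ) * c ^ s.card + ((K : ℝ) - s.card) * c ^ (s.card + 1) := by
  rw [← Finset.sum_add_sum_compl s]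
  have h1 : ∀ k ∈ s, c ^ (insert k s).card = c ^ s.card := by
    intro k hk; rw [Finset.insert_eq_self.2 hk]
  have h2 : ∀ k ∈ sᶜ, c ^ (insert k s).card = c ^ (s.card + 1) := by
    intro k hk
    rw [Finset.card_insert_of_notMem (Finset.mem_compl.1 hk)]
  rw [Finset.sum_congr rfl h1, Finset.sum_congr rfl h2, Finset.sum_const,
    Finset.sum_const, Finset.card_compl, Fintype.card_fin, nsmul_eq_mul, nsmul_eq_mul]
  have hle : s.card ≤ K := by
    simpa using Finset.card_le_card (Finset.subset_univ s)
  rw [Nat.cast_sub hle]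

private lemma key_bound (K L : ℕ) (c : ℝ) (hc : 0 ≤ c) :
    ∀ n, n ≤ L →
    (∑ ks : Fin n → Fin K, c ^ (Finset.image ks Finset.univ).card)
      ≤ ((K : ℝ) * c + L) ^ n := by
  intro n
  induction n with
  | zero =>
    intro _
    simp [Finset.univ_eq_empty (α := Fin 0)]
  | succ n ih =>
    intro hn
    have hn' : n ≤ L := Nat.le_of_succ_le hn
    have hrw : (∑ ks : Fin (n+1) → Fin K, c ^ (Finset.image ks Finset.univ).card)
        = ∑ p : Fin K × (Fin n → Fin K),
            c ^ (Finset.image (Fin.cons p.1 p.2 : Fin (n+1) → Fin K) Finset.univ).card := by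
      refine (Fintype.sum_equiv (Fin.consEquiv fun _ => Fin K) _ _ ?_).symm
      intro p; rfl
    rw [hrw, Fintype.sum_prod_type_right]
    have hstep : ∀ ks : Fin n → Fin K,
        (∑ k : Fin K,
          c ^ (Finset.image (Fin.cons k ks : Fin (n+1) → Fin K) Finset.univ).card)
          ≤ ((K : ℝ) * c + L) * c ^ (Finset.image ks Finset.univ).card := by
      intro ks
      set s := Finset.image ks Finset.univ with hs
      have : (∑ k : Fin K, c ^ (insert k s).card)
          = (s.card : ℝ) * c ^ s.card + ((K : ℝ) - s.card) * c ^ (s.card + 1) :=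
        sum_insert_pow c s
      calc (∑ k : Fin K,
          c ^ (Finset.image (Fin.cons k ks : Fin (n+1) → Fin K) Finset.univ).card)
          = ∑ k : Fin K, c ^ (insert k s).card := by
            refine Finset.sum_congr rfl fun k _ => ?_
            rw [image_cons_aux]
        _ = (s.card : ℝ) * c ^ s.card + ((K : ℝ) - s.card) * c ^ (s.card + 1) := this
        _ ≤ (L : ℝ) * c ^ s.card + (K : ℝ) * c ^ (s.card + 1) := by
            have hcard : s.card ≤ n := by
              simpa using Finset.card_image_le (f := ks) (s := Finset.univ)
            have hcardL : (s.card : ℝ) ≤ L := by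
              exact_mod_cast le_trans hcard hn'
            have h1 : (s.card : ℝ) * c ^ s.card ≤ (L : ℝ) * c ^ s.card :=
              mul_le_mul_of_nonneg_right hcardL (pow_nonneg hc _)
            have h2' : ((K : ℝ) - s.card) * c ^ (s.card + 1)
                ≤ (K : ℝ) * c ^ (s.card + 1) := by
              apply mul_le_mul_of_nonneg_right _ (pow_nonneg hc _)
              linarith [Nat.cast_nonneg (α := ℝ) s.card]
            linarith
        _ = ((K : ℝ) * c + L) * c ^ s.card := by ring
    calc (∑ ks : Fin n → Fin K, ∑ k : Fin K,
          c ^ (Finset.image (Fin.cons k ks : Fin (n+1) → Fin K) Finset.univ).card)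
        ≤ ∑ ks : Fin n → Fin K,
            ((K : ℝ) * c + L) * c ^ (Finset.image ks Finset.univ).card :=
          Finset.sum_le_sum fun ks _ => hstep ks
      _ = ((K : ℝ) * c + L)
            * ∑ ks : Fin n → Fin K, c ^ (Finset.image ks Finset.univ).card := by
          rw [Finset.mul_sum]
      _ ≤ ((K : ℝ) * c + L) * ((K : ℝ) * c + L) ^ n := by
          apply mul_le_mul_of_nonneg_left (ih hn')
          positivity
      _ = ((K : ℝ) * c + L) ^ (n + 1) := by ring

/-- Let `k 0, …, k (L-1)` be i.i.d. uniform samples from a set of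
size `K` and let `ℓ` be the number of distinct values among them. Then for any real
`c ≥ 0`, `E[c^ℓ] ≤ (c + L/K)^L`. The expectation is written out as the average over
all `K^L` equally likely tuples. -/
theorem expectation_pow_distinct_le (K L : ℕ) (hK : 0 < K) (hL : 0 < L)
    (c : ℝ) (hc : 0 ≤ c) :
    (∑ ks : Fin L → Fin K, c ^ (Finset.image ks Finset.univ).card) / (K : ℝ) ^ L
      ≤ (c + (L : ℝ) / (K : ℝ)) ^ L := by
  have hK' : (0 : ℝ) < K := by exact_mod_cast hK
  rw [div_le_iff₀ (by positivity)]
  have h := key_bound K L c hc L le_rfl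
  calc (∑ ks : Fin L → Fin K, c ^ (Finset.image ks Finset.univ).card)
      ≤ ((K : ℝ) * c + L) ^ L := h
    _ = (c + (L : ℝ) / (K : ℝ)) ^ L * (K : ℝ) ^ L := by
        rw [← mul_pow]
        congr 1
        field_simp
end
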